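/- Let p be a prime, and let P ≤ SL₃(ℚ_p) be the subgroup of upper triangular matrices and D ≤ P the subgroup of upper triangular matrices all of whose diagonal entries have p-adic absolute value 1 (i.e. lie in ℤ_pˣ). Then: (a) every finitely generated subgroup of D has compact closure in SL₃(ℚ_p) (D is topologically locally finite); (b) if g ∈ P is such that the closure of the cyclic subgroup ⟨g⟩ is compact, then g ∈ D. Consequently, D is the largest normal topologically locally finite subgroup of P, i.e. Rad_LF(P) = D. -/
import Mathlib


noncomputable section

/-- `SL₃(ℚ_p)` with the topology induced from the matrix entries. -/
abbrev SL3 (p : ℕ) [Fact p.Prime] := Matrix.SpecialLinearGroup (Fin 3) ℚ_[p]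

instance (p : ℕ) [Fact p.Prime] : TopologicalSpace (SL3 p) :=
  TopologicalSpace.induced
    (fun g : SL3 p => (g : Matrix (Fin 3) (Fin 3) ℚ_[p])) inferInstance

/-- The subgroup `P` of upper triangular matrices in `SL₃(ℚ_p)`, as a set. -/
def UpperTriangular3 (p : ℕ) [Fact p.Prime] : Set (SL3 p) :=
  {g | ∀ i j : Fin 3, j < i → (g : Matrix (Fin 3) (Fin 3) ℚ_[p]) i j = 0}

/-- The subgroup `D` of upper triangular matrices whose diagonal entries have
`p`-adic absolute value `1`, as a set. -/
def DiagUnitTriangular3 (p : ℕ) [Fact p.Prime] : Set (SL3 p) :=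
  {g | g ∈ UpperTriangular3 p ∧ ∀ i : Fin 3, ‖(g : Matrix (Fin 3) (Fin 3) ℚ_[p]) i i‖ = 1}

namespace Statement19Aux

open Matrix Topology

variable {p : ℕ} [Fact p.Prime]

local notation "M3" => Matrix (Fin 3) (Fin 3) ℚ_[p]

lemma inducing_coe :
    IsInducing (fun g : SL3 p => (g : Matrix (Fin 3) (Fin 3) ℚ_[p])) := ⟨rfl⟩

lemma embedding_coe :
    IsEmbedding (fun g : SL3 p => (g : Matrix (Fin 3) (Fin 3) ℚ_[p])) :=
  ⟨inducing_coe, fun _ _ h => Subtype.ext h⟩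

instance : T2Space (SL3 p) := embedding_coe.t2Space

lemma continuous_coe :
    Continuous (fun g : SL3 p => (g : Matrix (Fin 3) (Fin 3) ℚ_[p])) :=
  inducing_coe.continuous

/-- Bridge between the set-membership formulation and `BlockTriangular`. -/
lemma mem_iff_bt {g : SL3 p} :
    g ∈ UpperTriangular3 p ↔ BlockTriangular (g : M3) id :=
  ⟨fun h _ _ hij => h _ _ hij, fun h i j hij => h hij⟩

lemma coe_inv' (a : SL3 p) : ((a⁻¹ : SL3 p) : M3) = (a : M3)⁻¹ := by
  rw [Matrix.SpecialLinearGroup.coe_inv, Matrix.inv_def, a.2, Ring.inverse_one, one_smul]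

/-- Diagonal entries of a product of upper triangular matrices multiply. -/
lemma mul_diag {A B : M3} (hA : BlockTriangular A id) (hB : BlockTriangular B id)
    (i : Fin 3) : (A * B) i i = A i i * B i i := by
  rw [Matrix.mul_apply]
  apply Finset.sum_eq_single i
  · intro k _ hk
    rcases lt_or_gt_of_ne hk with h | h
    · rw [hA (show (id k : Fin 3) < id i from h), zero_mul]
    · rw [hB (show (id i : Fin 3) < id k from h), mul_zero]
  · intro h; exact absurd (Finset.mem_univ i) h

lemma bt_pow {A : M3} (hA : BlockTriangular A id) (n : ℕ) :
    BlockTriangular (A ^ n) id := by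
  induction n with
  | zero => simpa using Matrix.blockTriangular_one
  | succ n ih => rw [pow_succ]; exact ih.mul hA

lemma diag_pow {A : M3} (hA : BlockTriangular A id) (n : ℕ) (i : Fin 3) :
    (A ^ n) i i = A i i ^ n := by
  induction n with
  | zero => simp [Matrix.one_apply]
  | succ n ih => rw [pow_succ, pow_succ, mul_diag (bt_pow hA n) hA, ih]

/-- The subgroup of upper triangular matrices. -/
def HP (p : ℕ) [Fact p.Prime] : Subgroup (SL3 p) where
  carrier := UpperTriangular3 p
  one_mem' := by
    intro i j hij
    rw [Matrix.SpecialLinearGroup.coe_one]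
    exact Matrix.one_apply_ne (ne_of_gt hij)
  mul_mem' := by
    intro a b ha hb i j hij
    rw [Matrix.SpecialLinearGroup.coe_mul]
    exact ((mem_iff_bt.1 ha).mul (mem_iff_bt.1 hb)) hij
  inv_mem' := by
    intro a ha i j hij
    have : Invertible (a : Matrix (Fin 3) (Fin 3) ℚ_[p]) :=
      (a : Matrix (Fin 3) (Fin 3) ℚ_[p]).invertibleOfIsUnitDet (by rw [a.2]; exact isUnit_one)
    have h2 : BlockTriangular ((a : Matrix (Fin 3) (Fin 3) ℚ_[p]))⁻¹ id :=
      Matrix.blockTriangular_inv_of_blockTriangular (mem_iff_bt.1 ha)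
    rw [coe_inv']
    exact h2 hij

lemma inv_diag_mul_self {a : SL3 p} (ha : a ∈ UpperTriangular3 p) (i : Fin 3) :
    ((a⁻¹ : SL3 p) : M3) i i * (a : M3) i i = 1 := by
  have hainv : (a⁻¹ : SL3 p) ∈ UpperTriangular3 p := (HP p).inv_mem ha
  have h1 : ((a⁻¹ * a : SL3 p) : M3) i i = 1 := by
    rw [inv_mul_cancel, Matrix.SpecialLinearGroup.coe_one, Matrix.one_apply_eq]
  rw [Matrix.SpecialLinearGroup.coe_mul, mul_diag (mem_iff_bt.1 hainv) (mem_iff_bt.1 ha)] at h1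
  exact h1

/-- The subgroup of upper triangular matrices with unit diagonal. -/
def HD (p : ℕ) [Fact p.Prime] : Subgroup (SL3 p) where
  carrier := DiagUnitTriangular3 p
  one_mem' := by
    refine ⟨(HP p).one_mem, fun i => ?_⟩
    rw [Matrix.SpecialLinearGroup.coe_one, Matrix.one_apply_eq, norm_one]
  mul_mem' := by
    intro a b ha hb
    refine ⟨(HP p).mul_mem ha.1 hb.1, fun i => ?_⟩
    rw [Matrix.SpecialLinearGroup.coe_mul, mul_diag (mem_iff_bt.1 ha.1) (mem_iff_bt.1 hb.1),
      norm_mul, ha.2 i, hb.2 i, one_mul]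
  inv_mem' := by
    intro a ha
    refine ⟨(HP p).inv_mem ha.1, fun i => ?_⟩
    have h1 := inv_diag_mul_self ha.1 i
    have := congrArg (fun x : ℚ_[p] => ‖x‖) h1
    simp only [norm_mul, norm_one, ha.2 i, mul_one] at this
    exact this

lemma diag_norm_prod {g : SL3 p} (hg : g ∈ UpperTriangular3 p) :
    ‖(g : M3) 0 0‖ * ‖(g : M3) 1 1‖ * ‖(g : M3) 2 2‖ = 1 := by
  have hdet : (g : M3).det = 1 := g.2
  rw [Matrix.det_of_upperTriangular (mem_iff_bt.1 hg)] at hdet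
  have := congrArg (fun x : ℚ_[p] => ‖x‖) hdet
  simp only [norm_prod, norm_one] at this
  rw [Fin.prod_univ_three] at this
  exact this

/-- Part (b): periodic (compact-closure) elements of `P` lie in `D`. -/
lemma partB {g : SL3 p} (hg : g ∈ UpperTriangular3 p)
    (hc : IsCompact (closure ((Subgroup.zpowers g : Subgroup (SL3 p)) : Set (SL3 p)))) :
    g ∈ DiagUnitTriangular3 p := by
  have hle : ∀ i : Fin 3, ‖(g : M3) i i‖ ≤ 1 := by
    intro i
    by_contra hlt
    push_neg at hlt
    have hcont : Continuous fun x : SL3 p => ‖(x : M3) i i‖ :=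
      (continuous_coe.matrix_elem i i).norm
    obtain ⟨M, hM⟩ := (hc.image hcont).bddAbove
    obtain ⟨n, hn⟩ := pow_unbounded_of_one_lt M hlt
    have hmem : (g ^ n : SL3 p) ∈ closure ((Subgroup.zpowers g : Subgroup (SL3 p)) : Set (SL3 p)) :=
      subset_closure (Subgroup.npow_mem_zpowers g n)
    have hb : ‖((g ^ n : SL3 p) : M3) i i‖ ≤ M := hM ⟨_, hmem, rfl⟩
    rw [Matrix.SpecialLinearGroup.coe_pow, diag_pow (mem_iff_bt.1 hg), norm_pow] at hb
    linarith
  refine ⟨hg, ?_⟩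
  have h0 := norm_nonneg ((g : M3) 0 0)
  have h1 := norm_nonneg ((g : M3) 1 1)
  have h2 := norm_nonneg ((g : M3) 2 2)
  have l0 := hle 0
  have l1 := hle 1
  have l2 := hle 2
  have e := diag_norm_prod hg
  have e0 : ‖(g : M3) 0 0‖ = 1 := by nlinarith [mul_nonneg h1 h2, mul_le_one₀ l1 h2 l2]
  have e1 : ‖(g : M3) 1 1‖ = 1 := by nlinarith [mul_nonneg h0 h2, mul_le_one₀ l0 h2 l2]
  have e2 : ‖(g : M3) 2 2‖ = 1 := by nlinarith [mul_nonneg h0 h1, mul_le_one₀ l0 h1 l1]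
  intro i
  fin_cases i
  · exact e0
  · exact e1
  · exact e2


/-! ### `SL₃(ℤ_p)` and the compact subgroup it generates -/

/-- `SL₃(ℤ_p)`. -/
abbrev SL3Z (p : ℕ) [Fact p.Prime] := Matrix.SpecialLinearGroup (Fin 3) ℤ_[p]

instance : TopologicalSpace (SL3Z p) :=
  TopologicalSpace.induced
    (fun g : SL3Z p => (g : Matrix (Fin 3) (Fin 3) ℤ_[p])) inferInstance

instance : CompactSpace (Matrix (Fin 3) (Fin 3) ℤ_[p]) :=
  inferInstanceAs (CompactSpace (Fin 3 → Fin 3 → ℤ_[p]))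

lemma closedEmbedding_coeZ :
    IsClosedEmbedding (fun g : SL3Z p => (g : Matrix (Fin 3) (Fin 3) ℤ_[p])) := by
  refine ⟨⟨⟨rfl⟩, fun a b h => Subtype.ext h⟩, ?_⟩
  have hr : Set.range (fun g : SL3Z p => (g : Matrix (Fin 3) (Fin 3) ℤ_[p]))
      = (fun A : Matrix (Fin 3) (Fin 3) ℤ_[p] => A.det) ⁻¹' {1} := by
    ext A
    constructor
    · rintro ⟨g, rfl⟩; exact g.2
    · intro h; exact ⟨⟨A, h⟩, rfl⟩
  rw [hr]
  exact isClosed_singleton.preimage (continuous_id.matrix_det)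

instance : CompactSpace (SL3Z p) := closedEmbedding_coeZ.compactSpace

/-- The inclusion `SL₃(ℤ_p) →* SL₃(ℚ_p)`. -/
def phi (p : ℕ) [Fact p.Prime] : SL3Z p →* SL3 p :=
  Matrix.SpecialLinearGroup.map (PadicInt.Coe.ringHom)

lemma continuous_phi : Continuous (phi p) := by
  apply continuous_induced_rng.2
  have h : (fun g : SL3Z p => ((phi p g : SL3 p) : M3))
      = fun g : SL3Z p =>
        (g : Matrix (Fin 3) (Fin 3) ℤ_[p]).map (PadicInt.Coe.ringHom) := by
    funext g; rfl
  show Continuous fun g : SL3Z p => ((phi p g : SL3 p) : M3)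
  rw [h]
  exact Continuous.matrix_map
    (continuous_induced_dom : Continuous (fun g : SL3Z p => (g : Matrix (Fin 3) (Fin 3) ℤ_[p])))
    continuous_subtype_val

lemma mem_range_phi {g : SL3 p} (h : ∀ i j : Fin 3, ‖(g : M3) i j‖ ≤ 1) :
    g ∈ (phi p).range := by
  set B : Matrix (Fin 3) (Fin 3) ℤ_[p] := fun i j => ⟨(g : M3) i j, h i j⟩ with hB
  have hmap : B.map (PadicInt.Coe.ringHom) = (g : M3) := by
    ext i j; rfl
  have hdet : B.det = 1 := by
    apply Subtype.coe_injective
    have h2 : (PadicInt.Coe.ringHom B.det : ℚ_[p]) = (B.map (PadicInt.Coe.ringHom)).det :=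
      RingHom.map_det _ _
    rw [hmap, g.2] at h2
    exact h2
  refine ⟨⟨B, hdet⟩, ?_⟩
  apply Subtype.ext
  exact hmap

lemma compact_range_phi : IsCompact (((phi p).range : Subgroup (SL3 p)) : Set (SL3 p)) := by
  rw [MonoidHom.coe_range]
  exact isCompact_range continuous_phi

/-! ### Conjugation -/

/-- Conjugation by `t` as a monoid hom. -/
def conjHom (t : SL3 p) : SL3 p →* SL3 p where
  toFun g := t * g * t⁻¹
  map_one' := by group
  map_mul' x y := by group

lemma continuous_mul_mul (u v : SL3 p) : Continuous fun g : SL3 p => u * g * v := by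
  apply continuous_induced_rng.2
  have h : (fun g : SL3 p => ((u * g * v : SL3 p) : M3))
      = fun g : SL3 p => (u : M3) * (g : M3) * (v : M3) := by
    funext g
    rw [Matrix.SpecialLinearGroup.coe_mul, Matrix.SpecialLinearGroup.coe_mul]
  show Continuous fun g : SL3 p => ((u * g * v : SL3 p) : M3)
  rw [h]
  exact (Continuous.matrix_mul continuous_const continuous_coe).matrix_mul continuous_const

/-- Part (a): finitely generated subgroups of `D` have compact closure. -/
lemma partA (s : Finset (SL3 p)) (hs : (s : Set (SL3 p)) ⊆ DiagUnitTriangular3 p) :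
    IsCompact (closure
      ((Subgroup.closure (s : Set (SL3 p)) : Subgroup (SL3 p)) : Set (SL3 p))) := by
  classical
  have hp1 : (1 : ℝ) < (p : ℝ) := by exact_mod_cast (Fact.out : p.Prime).one_lt
  have hp0 : (0 : ℝ) < (p : ℝ) := lt_trans one_pos hp1
  -- a uniform bound on the entries of the generators
  obtain ⟨a, ha⟩ : ∃ a : ℕ, ∀ g ∈ s, ∀ i j : Fin 3, ‖(g : M3) i j‖ ≤ (p : ℝ) ^ a := by
    obtain ⟨a, hMa⟩ := pow_unbounded_of_one_lt
      ((s.sup fun g : SL3 p =>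
        Finset.univ.sup fun ij : Fin 3 × Fin 3 => ‖(g : M3) ij.1 ij.2‖₊ : NNReal) : ℝ) hp1
    refine ⟨a, fun g hg i j => ?_⟩
    have h1 : ‖(g : M3) i j‖₊ ≤ s.sup fun g : SL3 p =>
        Finset.univ.sup fun ij : Fin 3 × Fin 3 => ‖(g : M3) ij.1 ij.2‖₊ :=
      le_trans (Finset.le_sup (f := fun ij : Fin 3 × Fin 3 => ‖(g : M3) ij.1 ij.2‖₊)
        (Finset.mem_univ (i, j)))
        (Finset.le_sup (f := fun g : SL3 p =>
          Finset.univ.sup fun ij : Fin 3 × Fin 3 => ‖(g : M3) ij.1 ij.2‖₊) hg)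
    have h2 : (‖(g : M3) i j‖₊ : ℝ) < (p : ℝ) ^ a := lt_of_le_of_lt (by exact_mod_cast h1) hMa
    simpa using h2.le
  -- the conjugating diagonal element
  have hpQ : (p : ℚ_[p]) ≠ 0 := by
    exact_mod_cast Nat.cast_ne_zero.mpr (Fact.out : p.Prime).ne_zero
  set π : ℚ_[p] := (p : ℚ_[p]) ^ a with hπ
  have hπ0 : π ≠ 0 := pow_ne_zero _ hpQ
  set d : Fin 3 → ℚ_[p] := ![π, 1, π⁻¹] with hd
  set d' : Fin 3 → ℚ_[p] := ![π⁻¹, 1, π] with hd'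
  have hdd : ∀ i : Fin 3, d i * d' i = 1 := by
    intro i
    fin_cases i <;>
      simp [hd, hd', mul_inv_cancel₀ hπ0, inv_mul_cancel₀ hπ0]
  have hdet : (Matrix.diagonal d).det = 1 := by
    rw [Matrix.det_diagonal, Fin.prod_univ_three]
    simp [hd, mul_inv_cancel₀ hπ0]
  have hdet' : (Matrix.diagonal d').det = 1 := by
    rw [Matrix.det_diagonal, Fin.prod_univ_three]
    simp [hd', inv_mul_cancel₀ hπ0]
  set t : SL3 p := ⟨Matrix.diagonal d, hdet⟩ with ht
  set t' : SL3 p := ⟨Matrix.diagonal d', hdet'⟩ with ht'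
  have htinv : t⁻¹ = t' := by
    symm
    apply eq_inv_of_mul_eq_one_right
    apply Subtype.ext
    rw [Matrix.SpecialLinearGroup.coe_mul, Matrix.SpecialLinearGroup.coe_one]
    show Matrix.diagonal d * Matrix.diagonal d' = 1
    rw [Matrix.diagonal_mul_diagonal]
    have h9 : (fun i : Fin 3 => d i * d' i) = fun _ : Fin 3 => (1 : ℚ_[p]) :=
      funext fun i => hdd i
    rw [h9, Matrix.diagonal_one]
  -- norms
  set r : ℝ := ((p : ℝ)⁻¹) ^ a with hr
  have hr0 : 0 < r := by positivity
  have hr1 : r ≤ 1 := pow_le_one₀ (by positivity) (inv_le_one_of_one_le₀ hp1.le)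
  have hrmul : r * (p : ℝ) ^ a = 1 := by
    rw [hr, ← mul_pow, inv_mul_cancel₀ (ne_of_gt hp0), one_pow]
  have hnπ : ‖π‖ = r := by rw [hπ, hr, norm_pow, Padic.norm_p]
  have hnπ' : ‖π⁻¹‖ = r⁻¹ := by rw [norm_inv, hnπ]
  have c01 : ‖d 0‖ * ‖d' 1‖ ≤ r := by simp [hd, hd', hnπ]
  have c02 : ‖d 0‖ * ‖d' 2‖ ≤ r := by
    have : ‖d 0‖ * ‖d' 2‖ = r * r := by simp [hd, hd', hnπ]
    rw [this]
    nlinarith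
  have c12 : ‖d 1‖ * ‖d' 2‖ ≤ r := by simp [hd, hd', hnπ]
  have hij_bound : ∀ i j : Fin 3, i < j → ‖d i‖ * ‖d' j‖ ≤ r := by
    intro i j hij
    fin_cases i <;> fin_cases j <;>
      first
        | exact absurd hij (by decide)
        | exact c01
        | exact c02
        | exact c12
  -- the conjugated generators lie in `SL₃(ℤ_p)`
  have key : ∀ g ∈ s, conjHom t g ∈ (phi p).range := by
    intro g hg
    obtain ⟨hgu, hgd⟩ := hs hg
    apply mem_range_phi
    intro i j
    have hentry : ((conjHom t g : SL3 p) : M3) i j = d i * (g : M3) i j * d' j := by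
      show ((t * g * t⁻¹ : SL3 p) : M3) i j = _
      rw [htinv, Matrix.SpecialLinearGroup.coe_mul, Matrix.SpecialLinearGroup.coe_mul]
      show ((Matrix.diagonal d * (g : M3)) * Matrix.diagonal d') i j = _
      rw [Matrix.mul_diagonal, Matrix.diagonal_mul]
    rw [hentry]
    rcases lt_trichotomy i j with hij | hij | hij
    · rw [norm_mul, norm_mul]
      calc ‖d i‖ * ‖(g : M3) i j‖ * ‖d' j‖
          = (‖d i‖ * ‖d' j‖) * ‖(g : M3) i j‖ := by ring
        _ ≤ r * (p : ℝ) ^ a := by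
            apply mul_le_mul (hij_bound i j hij) (ha g hg i j) (norm_nonneg _)
            exact hr0.le
        _ = 1 := hrmul
    · subst hij
      have h10 : d i * (g : M3) i i * d' i = (g : M3) i i := by
        rw [mul_right_comm, hdd i, one_mul]
      rw [h10, hgd i]
    · rw [hgu i j hij, mul_zero, zero_mul, norm_zero]
      exact zero_le_one
  -- conclude
  set X : Set (SL3 p) := ((Subgroup.closure (s : Set (SL3 p)) : Subgroup (SL3 p)) : Set (SL3 p))
    with hX
  have hcont : Continuous (conjHom t) := continuous_mul_mul t t⁻¹
  have hfX : ∀ x ∈ Subgroup.closure (s : Set (SL3 p)), conjHom t x ∈ (phi p).range := by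
    intro x hx
    have h11 := Subgroup.mem_map_of_mem (conjHom t) hx
    rw [MonoidHom.map_closure] at h11
    refine (Subgroup.closure_le _).2 ?_ h11
    rintro y ⟨g, hg, rfl⟩
    exact key g hg
  have hclosed : IsClosed (((phi p).range : Subgroup (SL3 p)) : Set (SL3 p)) :=
    compact_range_phi.isClosed
  have hsub1 : closure ((conjHom t) '' X) ⊆ (((phi p).range : Subgroup (SL3 p)) : Set (SL3 p)) := by
    apply closure_minimal _ hclosed
    rintro y ⟨x, hx, rfl⟩
    exact hfX x hx
  have hcmp1 : IsCompact (closure ((conjHom t) '' X)) :=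
    compact_range_phi.of_isClosed_subset isClosed_closure hsub1
  have hcmp2 : IsCompact ((fun g : SL3 p => t⁻¹ * g * t) '' closure ((conjHom t) '' X)) :=
    hcmp1.image (continuous_mul_mul t⁻¹ t)
  apply hcmp2.of_isClosed_subset isClosed_closure
  intro x hx
  refine ⟨conjHom t x, image_closure_subset_closure_image hcont ⟨x, hx, rfl⟩, ?_⟩
  show t⁻¹ * (t * x * t⁻¹) * t = x
  group

end Statement19Aux

/-- (a) `D` is topologically locally finite; (b) every periodic
element of `P` lies in `D`; consequently `D = Rad_LF(P)` is the largest normal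
topologically locally finite subgroup of `P`. -/
theorem statement19 (p : ℕ) [Fact p.Prime] :
    (∀ s : Finset (SL3 p), (s : Set (SL3 p)) ⊆ DiagUnitTriangular3 p →
      IsCompact (closure
        ((Subgroup.closure (s : Set (SL3 p)) : Subgroup (SL3 p)) : Set (SL3 p)))) ∧
    (∀ g ∈ UpperTriangular3 p,
      IsCompact (closure ((Subgroup.zpowers g : Subgroup (SL3 p)) : Set (SL3 p))) →
        g ∈ DiagUnitTriangular3 p) ∧
    ∃ HP HD : Subgroup (SL3 p),
      (HP : Set (SL3 p)) = UpperTriangular3 p ∧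
      (HD : Set (SL3 p)) = DiagUnitTriangular3 p ∧
      HD ≤ HP ∧
      (∀ g ∈ HP, ∀ d ∈ HD, g * d * g⁻¹ ∈ HD) ∧
      (∀ s : Finset (SL3 p), (s : Set (SL3 p)) ⊆ (HD : Set (SL3 p)) →
        IsCompact (closure
          ((Subgroup.closure (s : Set (SL3 p)) : Subgroup (SL3 p)) : Set (SL3 p)))) ∧
      ∀ K : Subgroup (SL3 p), K ≤ HP →
        (∀ g ∈ HP, ∀ k ∈ K, g * k * g⁻¹ ∈ K) →
        (∀ s : Finset (SL3 p), (s : Set (SL3 p)) ⊆ (K : Set (SL3 p)) →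
          IsCompact (closure
            ((Subgroup.closure (s : Set (SL3 p)) : Subgroup (SL3 p)) : Set (SL3 p)))) →
        K ≤ HD := by
  refine ⟨fun s hs => Statement19Aux.partA s hs,
    fun g hg hc => Statement19Aux.partB hg hc,
    Statement19Aux.HP p, Statement19Aux.HD p, rfl, rfl,
    fun g hg => hg.1, ?_, fun s hs => Statement19Aux.partA s hs, ?_⟩
  · intro g hg k hk
    have hginv := (Statement19Aux.HP p).inv_mem hg
    have ht1 := Statement19Aux.mem_iff_bt.1 hg
    have ht2 := Statement19Aux.mem_iff_bt.1 hk.1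
    refine ⟨(Statement19Aux.HP p).mul_mem ((Statement19Aux.HP p).mul_mem hg hk.1) hginv,
      fun i => ?_⟩
    have hninv : ‖((g⁻¹ : SL3 p) : Matrix (Fin 3) (Fin 3) ℚ_[p]) i i‖ *
        ‖((g : SL3 p) : Matrix (Fin 3) (Fin 3) ℚ_[p]) i i‖ = 1 := by
      have h12 := congrArg (fun x : ℚ_[p] => ‖x‖) (Statement19Aux.inv_diag_mul_self hg i)
      simpa [norm_mul] using h12
    rw [Matrix.SpecialLinearGroup.coe_mul,
      Statement19Aux.mul_diag
        (Statement19Aux.mem_iff_bt.1 ((Statement19Aux.HP p).mul_mem hg hk.1))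
        (Statement19Aux.mem_iff_bt.1 hginv),
      Matrix.SpecialLinearGroup.coe_mul,
      Statement19Aux.mul_diag ht1 ht2,
      norm_mul, norm_mul, hk.2 i, mul_one, mul_comm]
    exact hninv
  · intro K hKP _ hKtlf k hk
    have h1 := hKtlf {k} (by simpa using hk)
    refine Statement19Aux.partB (hKP hk) ?_
    rw [Subgroup.zpowers_eq_closure]
    simpa using h1
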